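/- For 0 < α < ∞, there exist two functions f₁, f₂ in the Bloch type space B_α such that (1-|z|²)^{2α}(|f₁'(z)|² + |f₂'(z)|²) ≈ 1 for all z ∈ D; i.e. the quantity is bounded above and below by positive constants independent of z. -/

import Mathlib

open MeasureTheory Real Set Metric Filter

noncomputable section

/-- The point `e^{iθ}` on the unit circle. -/
def expI (θ : ℝ) : ℂ := Complex.exp (θ * Complex.I)

/-- Mean value of `f` over the subarc of the unit circle starting at angle `a`
with angular length `ℓ`. -/
def arcMean (f : ℂ → ℂ) (a ℓ : ℝ) : ℂ := (ℓ⁻¹ : ℝ) • ∫ θ in a..(a + ℓ), f (expI θ)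

/-- `f` has Campanato `(p,η)`-seminorm at most `M`:
for every subarc `I`, `|I|^{-η} ∫_I |f - f_I|^p |dζ|/(2π) ≤ M^p`. -/
def campBound (p η M : ℝ) (f : ℂ → ℂ) : Prop :=
  ∀ a ℓ : ℝ, 0 < ℓ → ℓ ≤ 2 * π →
    (∫ θ in a..(a + ℓ), ‖f (expI θ) - arcMean f a ℓ‖ ^ p) / (2 * π)
      ≤ (ℓ / (2 * π)) ^ η * M ^ p

/-- `f ∈ L^p` of the circle (locally, in the interval-integrable sense). -/
def pIntegrableOnCircle (p : ℝ) (f : ℂ → ℂ) : Prop :=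
  ∀ a b : ℝ, IntervalIntegrable (fun θ => ‖f (expI θ)‖ ^ p) volume a b


/-! The derivatives are the two halves `g₀, g₁` (even and odd indices) of the gap series
`∑ₘ bᵐ z^(qᵐ)`, with `b = q ^ α` and the integer `q` large. On the annulus
`1 - q⁻ⁿ ≤ |z| ≤ 1 - q⁻⁽ⁿ⁺¹⁾` the `n`-th term has modulus at least `bⁿ / 8`, the terms of index
below `n` and above `n + 1` have moduli summing to at most `bⁿ / 12` (a geometric sum below,
superexponential decay above), and all moduli together are at most `2 bⁿ⁺¹`. Since the
`(n + 1)`-st term lies in the other half, the half containing the `n`-th term has modulus at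
least `bⁿ / 24`, while `(1 - |z|²)^α` lies between `b⁻⁽ⁿ⁺¹⁾` and `2^α b⁻ⁿ`. The two functions are
termwise primitives of `g₀` and `g₁`. -/

theorem two_mul_norm_sub_tsum_norm_le_norm_tsum {ι E : Type*} [NormedAddCommGroup E]
    [CompleteSpace E] {f : ι → E} (hf : Summable fun j => ‖f j‖) (i : ι) :
    2 * ‖f i‖ - ∑' j, ‖f j‖ ≤ ‖∑' j, f j‖ := by
  classical
  have hnorm_ite : ∀ j, ‖ite (j = i) 0 (f j)‖ = ite (j = i) 0 ‖f j‖ := fun j => by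
    split_ifs <;> simp
  have hrest : ‖∑' j, ite (j = i) 0 (f j)‖ ≤ ∑' j, ite (j = i) 0 ‖f j‖ :=
    (norm_tsum_le_tsum_norm (hf.of_nonneg_of_le (fun _ => norm_nonneg _)
      fun j => (hnorm_ite j).trans_le (by split_ifs <;> simp))).trans_eq
      (tsum_congr hnorm_ite)
  rw [hf.of_norm.tsum_eq_add_tsum_ite i, hf.tsum_eq_add_tsum_ite i]
  linarith [norm_le_add_norm_add (f i) (∑' j, ite (j = i) 0 (f j))]

theorem add_tsum_comp_le_tsum {ι κ : Type*} {u : ι → ℝ} (hu : Summable u)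
    (hu0 : ∀ j, 0 ≤ u j) {φ : κ → ι} (hφ : φ.Injective) {i : ι} (hi : ∀ k, φ k ≠ i) :
    u i + ∑' k, u (φ k) ≤ ∑' j, u j := by
  classical
  have hite_nonneg : ∀ j, 0 ≤ ite (j = i) 0 (u j) := fun j => by
    split_ifs
    exacts [le_rfl, hu0 j]
  rw [hu.tsum_eq_add_tsum_ite i, add_le_add_iff_left]
  exact Summable.tsum_le_tsum_of_inj φ hφ (fun j _ => hite_nonneg j) (fun k => by simp [hi k])
    (hu.comp_injective hφ)
    (hu.of_nonneg_of_le hite_nonneg fun j => by split_ifs <;> simp [hu0 j])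

theorem exp_neg_two_mul_le_one_sub {x : ℝ} (hx0 : 0 ≤ x) (hx : x ≤ 1 / 2) :
    exp (-2 * x) ≤ 1 - x := by
  have h1 : 1 + 2 * x ≤ exp (2 * x) := by linarith [add_one_le_exp (2 * x)]
  rw [neg_mul, exp_neg, inv_le_iff_one_le_mul₀ (exp_pos _)]
  nlinarith

theorem exp_neg_two_le_pow {r : ℝ} {N : ℕ} (hN : 2 ≤ N) (hr : 1 - (N : ℝ)⁻¹ ≤ r) :
    exp (-2) ≤ r ^ N := by
  have hN0 : (0 : ℝ) < N := by positivity
  have hx : (N : ℝ)⁻¹ ≤ 1 / 2 := by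
    rw [inv_le_comm₀ hN0 (by norm_num)]
    norm_num
    exact_mod_cast hN
  calc exp (-2) = exp (-2 * (N : ℝ)⁻¹) ^ N := by
        rw [← exp_nat_mul]; field_simp
    _ ≤ r ^ N := pow_le_pow_left₀ (exp_pos _).le
        ((exp_neg_two_mul_le_one_sub (by positivity) hx).trans hr) N

theorem one_div_eight_le_exp_neg_two : 1 / 8 ≤ exp (-2) := by
  have : exp (-2) = exp (-1) ^ 2 := by rw [← exp_nat_mul]; norm_num
  nlinarith [exp_neg_one_gt_d9]

theorem pow_mul_le_exp_neg {r : ℝ} (hr0 : 0 ≤ r) {N : ℕ} (hN : 1 ≤ N)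
    (hr : r ≤ 1 - (N : ℝ)⁻¹) (M : ℕ) : r ^ (N * M) ≤ exp (-M) := by
  have hrN : r ^ N ≤ exp (-1) := by
    refine (pow_le_pow_left₀ hr0 hr N).trans ?_
    simpa [one_div] using one_sub_div_pow_le_exp_neg (n := N) (t := 1) (by exact_mod_cast hN)
  calc r ^ (N * M) = (r ^ N) ^ M := pow_mul r N M
    _ ≤ exp (-1) ^ M := pow_le_pow_left₀ (pow_nonneg hr0 N) hrN M
    _ = exp (-M) := by rw [← exp_nat_mul]; ring_nf

theorem exp_neg_pow_le {q : ℝ} (hq : 2 ≤ q) (j : ℕ) : exp (-q ^ j) ≤ exp (-q / 2) ^ j := by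
  rw [← exp_nat_mul, exp_le_exp]
  have := one_add_mul_le_pow (show (-2 : ℝ) ≤ q - 1 by linarith) j
  rw [add_sub_cancel] at this
  have hj : (0 : ℝ) ≤ j := j.cast_nonneg
  nlinarith

theorem exists_one_sub_inv_pow_near {q : ℕ} (hq : 2 ≤ q) {r : ℝ} (hr0 : 0 ≤ r) (hr1 : r < 1) :
    ∃ n : ℕ, 1 - ((q : ℝ) ^ n)⁻¹ ≤ r ∧ r ≤ 1 - ((q : ℝ) ^ (n + 1))⁻¹ := by
  have hq' : (1 : ℝ) < q := by exact_mod_cast hq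
  obtain ⟨n, hhi, hlo⟩ := exists_nat_pow_near_of_lt_one (sub_pos.mpr hr1) (by linarith)
    (inv_pos.mpr (by linarith)) (inv_lt_one_of_one_lt₀ hq')
  rw [inv_pow] at hhi hlo
  exact ⟨n, by linarith, by linarith⟩

theorem rpow_one_sub_sq_mem_Icc {α r : ℝ} {q n : ℕ} (hα : 0 ≤ α) (hq : 0 < q) (hr0 : 0 ≤ r)
    (hlo : 1 - ((q : ℝ) ^ n)⁻¹ ≤ r) (hhi : r ≤ 1 - ((q : ℝ) ^ (n + 1))⁻¹) :
    (1 - r ^ 2) ^ α ∈ Icc ((((q : ℝ) ^ α) ^ (n + 1))⁻¹) (2 ^ α * (((q : ℝ) ^ α) ^ n)⁻¹) := by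
  have hq0 : (0 : ℝ) ≤ q := q.cast_nonneg
  have hqn : ∀ m, (((q : ℝ) ^ α) ^ m)⁻¹ = (((q : ℝ) ^ m)⁻¹) ^ α := fun m => by
    rw [rpow_pow_comm hq0, inv_rpow (pow_nonneg hq0 m)]
  have hpos : (0 : ℝ) < ((q : ℝ) ^ (n + 1))⁻¹ := by positivity
  rw [hqn, hqn, ← mul_rpow (by norm_num) (by positivity)]
  constructor
  · exact rpow_le_rpow hpos.le (by nlinarith) hα
  · exact rpow_le_rpow (by nlinarith) (by nlinarith) hα

def monomialSeries (c : ℕ → ℂ) (N : ℕ → ℕ) (z : ℂ) : ℂ := ∑' k, c k * z ^ N k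

def monomialPrimitive (c : ℕ → ℂ) (N : ℕ → ℕ) : ℂ → ℂ :=
  monomialSeries (fun k => c k / (N k + 1)) (fun k => N k + 1)

theorem hasDerivAt_monomialPrimitive {c : ℕ → ℂ} {N : ℕ → ℕ}
    (hc : ∀ ρ : ℝ, 0 ≤ ρ → ρ < 1 → Summable fun k => ‖c k‖ * ρ ^ N k) {z : ℂ}
    (hz : ‖z‖ < 1) : HasDerivAt (monomialPrimitive c N) (monomialSeries c N z) z := by
  obtain ⟨ρ, hzρ, hρ1⟩ := exists_between hz
  have hρ0 : 0 < ρ := (norm_nonneg z).trans_lt hzρ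
  have hterm : ∀ k (w : ℂ),
      HasDerivAt (fun w => c k / (N k + 1) * w ^ (N k + 1)) (c k * w ^ N k) w := fun k w => by
    refine ((hasDerivAt_pow (N k + 1) w).const_mul (c k / (N k + 1))).congr_deriv ?_
    rw [Nat.add_sub_cancel]
    push_cast
    field_simp
  have hbound : ∀ k, ∀ w ∈ ball (0 : ℂ) ρ, ‖c k * w ^ N k‖ ≤ ‖c k‖ * ρ ^ N k :=
    fun k w hw => by
      rw [norm_mul, norm_pow]
      exact mul_le_mul_of_nonneg_left
        (pow_le_pow_left₀ (norm_nonneg w) (mem_ball_zero_iff.mp hw).le _) (norm_nonneg _)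
  exact hasDerivAt_tsum_of_isPreconnected (hc ρ hρ0.le hρ1) isOpen_ball
    (convex_ball 0 ρ).isPreconnected (fun k w _ => hterm k w) hbound (mem_ball_self hρ0)
    (by simp) (mem_ball_zero_iff.mpr hzρ)

/-- The `0`-th exponent is `0` rather than `q ^ 0 = 1`, so that the even gap series does not
vanish at the origin. -/
def gapExp (q m : ℕ) : ℕ := if m = 0 then 0 else q ^ m

def gapTerm (b : ℝ) (q : ℕ) (r : ℝ) (m : ℕ) : ℝ := b ^ m * r ^ gapExp q m

def gapSeries (b : ℝ) (q p : ℕ) : ℂ → ℂ :=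
  monomialSeries (fun k => (b : ℂ) ^ (2 * k + p)) (fun k => gapExp q (2 * k + p))

def gapPrimitive (b : ℝ) (q p : ℕ) : ℂ → ℂ :=
  monomialPrimitive (fun k => (b : ℂ) ^ (2 * k + p)) (fun k => gapExp q (2 * k + p))

structure GapParams (b : ℝ) (q : ℕ) : Prop where
  two_le : 2 ≤ q
  sixteen_le : 16 ≤ b
  sq_mul_exp_le : b ^ 2 * exp (-(q : ℝ) / 2) ≤ 1 / 256

section GapTerm

variable {b r : ℝ} {q n : ℕ}

theorem gapTerm_nonneg (hb : 0 ≤ b) (hr : 0 ≤ r) (m : ℕ) : 0 ≤ gapTerm b q r m := by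
  unfold gapTerm; positivity

theorem gapTerm_le_pow (hb : 0 ≤ b) (hr0 : 0 ≤ r) (hr1 : r ≤ 1) (m : ℕ) :
    gapTerm b q r m ≤ b ^ m :=
  mul_le_of_le_one_right (pow_nonneg hb m) (pow_le_one₀ hr0 hr1)

theorem pow_div_eight_le_gapTerm (hb : 0 ≤ b) (hq : 2 ≤ q) (hr : 1 - ((q : ℝ) ^ n)⁻¹ ≤ r) :
    b ^ n / 8 ≤ gapTerm b q r n := by
  rcases Nat.eq_zero_or_pos n with rfl | hn
  · norm_num [gapTerm, gapExp]
  have hN : 2 ≤ q ^ n := hq.trans (Nat.le_self_pow hn.ne' q)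
  have hr' : exp (-2) ≤ r ^ gapExp q n := by
    rw [gapExp, if_neg hn.ne']
    exact exp_neg_two_le_pow hN (by exact_mod_cast hr)
  rw [gapTerm, div_eq_mul_one_div]
  exact mul_le_mul_of_nonneg_left (one_div_eight_le_exp_neg_two.trans hr') (pow_nonneg hb n)

theorem gapTerm_add_le (hb : 0 ≤ b) (hq : 2 ≤ q) (hr0 : 0 ≤ r)
    (hr : r ≤ 1 - ((q : ℝ) ^ (n + 1))⁻¹) (j : ℕ) :
    gapTerm b q r (j + (n + 1)) ≤ b ^ (n + 1) * (b * exp (-(q : ℝ) / 2)) ^ j := by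
  have hexp : gapExp q (j + (n + 1)) = q ^ (n + 1) * q ^ j := by
    rw [gapExp, if_neg (by omega), ← pow_add, add_comm]
  have hr' : r ^ gapExp q (j + (n + 1)) ≤ exp (-(q : ℝ) / 2) ^ j := by
    rw [hexp]
    refine (pow_mul_le_exp_neg hr0 (Nat.one_le_pow _ _ (by omega)) (by exact_mod_cast hr) _).trans
      ?_
    exact_mod_cast exp_neg_pow_le (q := q) (by exact_mod_cast hq) j
  calc gapTerm b q r (j + (n + 1)) ≤ b ^ (j + (n + 1)) * exp (-(q : ℝ) / 2) ^ j :=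
        mul_le_mul_of_nonneg_left hr' (pow_nonneg hb _)
    _ = b ^ (n + 1) * (b * exp (-(q : ℝ) / 2)) ^ j := by ring

theorem norm_ofReal_pow_mul_pow_gapExp (hb : 0 ≤ b) (m : ℕ) (z : ℂ) :
    ‖(b : ℂ) ^ m * z ^ gapExp q m‖ = gapTerm b q ‖z‖ m := by
  rw [norm_mul, norm_pow, norm_pow, Complex.norm_real, Real.norm_of_nonneg hb, gapTerm]

end GapTerm

theorem two_mul_add_injective (p : ℕ) : Function.Injective fun k => 2 * k + p :=
  fun _ _ h => by simp only at h; omega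

namespace GapParams

variable {b r : ℝ} {q n : ℕ} {z : ℂ}

theorem pos (h : GapParams b q) : 0 < b := by linarith [h.sixteen_le]

theorem nonneg (h : GapParams b q) : 0 ≤ b := h.pos.le

theorem ratio_nonneg (h : GapParams b q) : 0 ≤ b * exp (-(q : ℝ) / 2) :=
  mul_nonneg h.nonneg (exp_pos _).le

theorem mul_ratio_le (h : GapParams b q) : b * (b * exp (-(q : ℝ) / 2)) ≤ 1 / 256 := by
  simpa [← mul_assoc, ← sq] using h.sq_mul_exp_le

theorem ratio_le_half (h : GapParams b q) : b * exp (-(q : ℝ) / 2) ≤ 1 / 2 := by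
  nlinarith [h.mul_ratio_le, h.sixteen_le, exp_pos (-(q : ℝ) / 2)]

theorem lt_one (h : GapParams b q) (hr : r ≤ 1 - ((q : ℝ) ^ n)⁻¹) : r < 1 := by
  have : (0 : ℝ) < q := Nat.cast_pos.mpr (by linarith [h.two_le])
  have : (0 : ℝ) < ((q : ℝ) ^ n)⁻¹ := by positivity
  linarith

theorem gapTerm_add_two_le (h : GapParams b q) (hr0 : 0 ≤ r)
    (hr : r ≤ 1 - ((q : ℝ) ^ (n + 1))⁻¹) (j : ℕ) :
    gapTerm b q r (j + (n + 2)) ≤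
      b ^ n * (b * (b * exp (-(q : ℝ) / 2))) * (b * exp (-(q : ℝ) / 2)) ^ j := by
  have := gapTerm_add_le h.nonneg h.two_le hr0 hr (j + 1)
  rw [show j + 1 + (n + 1) = j + (n + 2) by omega] at this
  exact this.trans_eq (by ring)

theorem summable_gapTerm (h : GapParams b q) (hr0 : 0 ≤ r) (hr1 : r < 1) :
    Summable (gapTerm b q r) := by
  obtain ⟨n, -, hr⟩ := exists_one_sub_inv_pow_near h.two_le hr0 hr1
  have hs := h.ratio_le_half
  refine (summable_nat_add_iff (n + 2)).mp <| Summable.of_nonneg_of_le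
    (fun j => gapTerm_nonneg h.nonneg hr0 _) (h.gapTerm_add_two_le hr0 hr)
    ((summable_geometric_of_lt_one h.ratio_nonneg (by linarith)).mul_left _)

theorem tsum_gapTerm_add_two_le (h : GapParams b q) (hr0 : 0 ≤ r)
    (hr : r ≤ 1 - ((q : ℝ) ^ (n + 1))⁻¹) :
    ∑' j, gapTerm b q r (j + (n + 2)) ≤ b ^ n / 128 := by
  set s := b * exp (-(q : ℝ) / 2)
  have hs0 : 0 ≤ s := h.ratio_nonneg
  have hs : s ≤ 1 / 2 := h.ratio_le_half
  have hinv : (1 - s)⁻¹ ≤ 2 := by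
    rw [inv_le_comm₀ (by linarith) (by norm_num)]; linarith
  calc ∑' j, gapTerm b q r (j + (n + 2)) ≤ ∑' j, b ^ n * (b * s) * s ^ j :=
        ((summable_nat_add_iff (n + 2)).mpr (h.summable_gapTerm hr0 (h.lt_one hr))).tsum_le_tsum
          (h.gapTerm_add_two_le hr0 hr)
          ((summable_geometric_of_lt_one hs0 (by linarith)).mul_left _)
    _ = b ^ n * (b * s) * (1 - s)⁻¹ := by
        rw [tsum_mul_left, tsum_geometric_of_lt_one hs0 (by linarith)]
    _ ≤ b ^ n * (1 / 256) * 2 :=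
        mul_le_mul (mul_le_mul_of_nonneg_left h.mul_ratio_le (pow_nonneg h.nonneg n)) hinv
          (inv_nonneg.mpr (by linarith)) (mul_nonneg (pow_nonneg h.nonneg n) (by norm_num))
    _ = b ^ n / 128 := by ring

theorem tsum_gapTerm_le (h : GapParams b q) (hr0 : 0 ≤ r)
    (hr : r ≤ 1 - ((q : ℝ) ^ (n + 1))⁻¹) :
    ∑' m, gapTerm b q r m ≤ gapTerm b q r n + gapTerm b q r (n + 1) + b ^ n / 12 := by
  have hb := h.sixteen_le
  have hr1 : r < 1 := h.lt_one hr
  have hlow : ∑ m ∈ Finset.range n, gapTerm b q r m ≤ b ^ n / 15 :=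
    calc ∑ m ∈ Finset.range n, gapTerm b q r m ≤ ∑ m ∈ Finset.range n, b ^ m :=
          Finset.sum_le_sum fun m _ => gapTerm_le_pow h.nonneg hr0 hr1.le m
      _ = (b ^ n - 1) / (b - 1) := geom_sum_eq (by linarith) n
      _ ≤ b ^ n / 15 := by
          rw [div_le_div_iff₀ (by linarith) (by norm_num)]
          nlinarith [pow_nonneg h.nonneg n]
  rw [← Summable.sum_add_tsum_nat_add (n + 2) (h.summable_gapTerm hr0 hr1),
    Finset.sum_range_succ, Finset.sum_range_succ]
  linarith [h.tsum_gapTerm_add_two_le hr0 hr, pow_nonneg h.nonneg n]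

theorem tsum_gapTerm_le_two_mul_pow (h : GapParams b q) (hr0 : 0 ≤ r)
    (hr : r ≤ 1 - ((q : ℝ) ^ (n + 1))⁻¹) : ∑' m, gapTerm b q r m ≤ 2 * b ^ (n + 1) := by
  have hr1 := (h.lt_one hr).le
  have htotal := h.tsum_gapTerm_le hr0 hr
  have hn := gapTerm_le_pow h.nonneg hr0 hr1 n (q := q)
  have hn1 := gapTerm_le_pow h.nonneg hr0 hr1 (n + 1) (q := q)
  have hgrowth : b ^ n * 16 ≤ b ^ (n + 1) := by
    rw [pow_succ]; exact mul_le_mul_of_nonneg_left h.sixteen_le (pow_nonneg h.nonneg n)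
  linarith [pow_nonneg h.nonneg n]

theorem summable_gapTerm_two_mul_add (h : GapParams b q) (p : ℕ) (hr0 : 0 ≤ r) (hr1 : r < 1) :
    Summable fun k => gapTerm b q r (2 * k + p) :=
  (h.summable_gapTerm hr0 hr1).comp_injective (two_mul_add_injective p)

theorem summable_norm_gapSeries_term (h : GapParams b q) (p : ℕ) (hz : ‖z‖ < 1) :
    Summable fun k => ‖(b : ℂ) ^ (2 * k + p) * z ^ gapExp q (2 * k + p)‖ :=
  (h.summable_gapTerm_two_mul_add p (norm_nonneg z) hz).congr fun _ =>
    (norm_ofReal_pow_mul_pow_gapExp h.nonneg _ z).symm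

theorem hasDerivAt_gapPrimitive (h : GapParams b q) (p : ℕ) (hz : ‖z‖ < 1) :
    HasDerivAt (gapPrimitive b q p) (gapSeries b q p z) z := by
  refine hasDerivAt_monomialPrimitive (fun ρ hρ0 hρ1 => ?_) hz
  refine (h.summable_gapTerm_two_mul_add p hρ0 hρ1).congr fun _ => ?_
  rw [gapTerm, norm_pow, Complex.norm_real, Real.norm_of_nonneg h.nonneg]

theorem norm_gapSeries_le (h : GapParams b q) (p : ℕ) (hz : ‖z‖ < 1) :
    ‖gapSeries b q p z‖ ≤ ∑' m, gapTerm b q ‖z‖ m :=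
  calc ‖gapSeries b q p z‖ ≤ ∑' k, ‖(b : ℂ) ^ (2 * k + p) * z ^ gapExp q (2 * k + p)‖ :=
        norm_tsum_le_tsum_norm (h.summable_norm_gapSeries_term p hz)
    _ = ∑' k, gapTerm b q ‖z‖ (2 * k + p) :=
        tsum_congr fun _ => norm_ofReal_pow_mul_pow_gapExp h.nonneg _ z
    _ ≤ ∑' m, gapTerm b q ‖z‖ m :=
        Summable.tsum_le_tsum_of_inj _ (two_mul_add_injective p)
          (fun m _ => gapTerm_nonneg h.nonneg (norm_nonneg z) m) (fun _ => le_rfl)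
          (h.summable_gapTerm_two_mul_add p (norm_nonneg z) hz)
          (h.summable_gapTerm (norm_nonneg z) hz)

theorem pow_div_le_norm_gapSeries (h : GapParams b q) (hlo : 1 - ((q : ℝ) ^ n)⁻¹ ≤ ‖z‖)
    (hhi : ‖z‖ ≤ 1 - ((q : ℝ) ^ (n + 1))⁻¹) : b ^ n / 24 ≤ ‖gapSeries b q (n % 2) z‖ := by
  have hz := h.lt_one hhi
  have hdom := two_mul_norm_sub_tsum_norm_le_norm_tsum
    (h.summable_norm_gapSeries_term (n % 2) hz) (n / 2)
  simp_rw [norm_ofReal_pow_mul_pow_gapExp h.nonneg] at hdom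
  rw [show 2 * (n / 2) + n % 2 = n by omega] at hdom
  -- the other large term, of index `n + 1`, belongs to the other half of the gap series
  have hrest := add_tsum_comp_le_tsum (h.summable_gapTerm (norm_nonneg z) hz)
    (gapTerm_nonneg h.nonneg (norm_nonneg z)) (two_mul_add_injective (n % 2)) (i := n + 1)
    (fun k => by omega)
  have htotal := h.tsum_gapTerm_le (norm_nonneg z) hhi
  have hmain := pow_div_eight_le_gapTerm h.nonneg h.two_le hlo
  change _ ≤ ‖∑' k, _‖
  linarith

theorem weighted_sq_norm_gapSeries_mem_Icc {α : ℝ} (hα : 0 < α) (h : GapParams ((q : ℝ) ^ α) q)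
    (hz : ‖z‖ < 1) :
    (1 - ‖z‖ ^ 2) ^ (2 * α) *
        (‖gapSeries ((q : ℝ) ^ α) q 0 z‖ ^ 2 + ‖gapSeries ((q : ℝ) ^ α) q 1 z‖ ^ 2) ∈
      Icc ((24 * (q : ℝ) ^ α)⁻¹ ^ 2) (8 * (2 ^ α * (q : ℝ) ^ α) ^ 2) := by
  set b := (q : ℝ) ^ α
  have hb := h.pos
  obtain ⟨n, hlo, hhi⟩ := exists_one_sub_inv_pow_near h.two_le (norm_nonneg z) hz
  obtain ⟨hXlo, hXhi⟩ :=
    rpow_one_sub_sq_mem_Icc hα.le (by linarith [h.two_le]) (norm_nonneg z) hlo hhi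
  have hw : 0 ≤ 1 - ‖z‖ ^ 2 := by nlinarith [norm_nonneg z]
  have hX : (1 - ‖z‖ ^ 2) ^ (2 * α) = ((1 - ‖z‖ ^ 2) ^ α) ^ 2 := by
    rw [← rpow_mul_natCast hw]
    ring_nf
  have hlower : (b ^ n / 24) ^ 2 ≤ ‖gapSeries b q 0 z‖ ^ 2 + ‖gapSeries b q 1 z‖ ^ 2 := by
    have := pow_le_pow_left₀ (by positivity) (h.pow_div_le_norm_gapSeries hlo hhi) 2
    rcases Nat.mod_two_eq_zero_or_one n with hp | hp <;> rw [hp] at this <;>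
      linarith [sq_nonneg ‖gapSeries b q 0 z‖, sq_nonneg ‖gapSeries b q 1 z‖]
  have hupper : ∀ p, ‖gapSeries b q p z‖ ^ 2 ≤ (2 * b ^ (n + 1)) ^ 2 := fun p =>
    pow_le_pow_left₀ (norm_nonneg _)
      ((h.norm_gapSeries_le p hz).trans (h.tsum_gapTerm_le_two_mul_pow (norm_nonneg z) hhi)) 2
  rw [hX]
  constructor
  · calc (24 * b)⁻¹ ^ 2 = ((b ^ (n + 1))⁻¹) ^ 2 * (b ^ n / 24) ^ 2 := by field_simp; ring
      _ ≤ _ := mul_le_mul (pow_le_pow_left₀ (by positivity) hXlo 2) hlower (by positivity)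
          (by positivity)
  · calc _ ≤ (2 ^ α * (b ^ n)⁻¹) ^ 2 * (2 * (2 * b ^ (n + 1)) ^ 2) :=
          mul_le_mul (pow_le_pow_left₀ (rpow_nonneg hw α) hXhi 2)
            (by linarith [hupper 0, hupper 1]) (by positivity) (by positivity)
      _ = 8 * (2 ^ α * b) ^ 2 := by field_simp; ring

end GapParams

theorem exists_gapParams {α : ℝ} (hα : 0 < α) : ∃ q : ℕ, GapParams ((q : ℝ) ^ α) q := by
  have hlarge : ∀ᶠ x : ℝ in atTop, 16 ≤ x ^ α :=
    (tendsto_rpow_atTop hα).eventually_ge_atTop 16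
  have hdecay : ∀ᶠ x : ℝ in atTop, x ^ (2 * α) * exp (-(1 / 2) * x) < 1 / 256 :=
    (tendsto_rpow_mul_exp_neg_mul_atTop_nhds_zero (2 * α) (1 / 2) (by norm_num)).eventually_lt_const
      (by norm_num)
  obtain ⟨q, hq16, hqexp, hq2⟩ := (tendsto_natCast_atTop_atTop.eventually hlarge).and
    ((tendsto_natCast_atTop_atTop.eventually hdecay).and (eventually_ge_atTop 2)) |>.exists
  refine ⟨q, hq2, hq16, ?_⟩
  have : ((q : ℝ) ^ α) ^ 2 * exp (-(q : ℝ) / 2) = (q : ℝ) ^ (2 * α) * exp (-(1 / 2) * q) := by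
    rw [← rpow_natCast, ← rpow_mul q.cast_nonneg]
    ring_nf
  linarith

/-- for `0 < α < ∞` there are two Bloch-type functions `f₁, f₂`
with `(1-|z|²)^{2α}(|f₁'(z)|² + |f₂'(z)|²) ≈ 1` on the unit disk. -/
theorem two_bloch_functions (α : ℝ) (hα : 0 < α) :
    ∃ f₁ f₂ : ℂ → ℂ, DifferentiableOn ℂ f₁ (Metric.ball 0 1) ∧
      DifferentiableOn ℂ f₂ (Metric.ball 0 1) ∧
      ∃ c₁ c₂ : ℝ, 0 < c₁ ∧ 0 < c₂ ∧ ∀ z : ℂ, ‖z‖ < 1 →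
        c₁ ≤ (1 - ‖z‖ ^ 2) ^ (2*α) * (‖deriv f₁ z‖^2 + ‖deriv f₂ z‖^2) ∧
        (1 - ‖z‖ ^ 2) ^ (2*α) * (‖deriv f₁ z‖^2 + ‖deriv f₂ z‖^2) ≤ c₂ := by
  obtain ⟨q, h⟩ := exists_gapParams hα
  have hderiv : ∀ p {z : ℂ}, ‖z‖ < 1 →
      HasDerivAt (gapPrimitive ((q : ℝ) ^ α) q p) (gapSeries ((q : ℝ) ^ α) q p z) z :=
    fun p _ hz => h.hasDerivAt_gapPrimitive p hz
  have hdiff : ∀ p, DifferentiableOn ℂ (gapPrimitive ((q : ℝ) ^ α) q p) (Metric.ball 0 1) :=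
    fun p _ hz => (hderiv p (mem_ball_zero_iff.mp hz)).differentiableAt.differentiableWithinAt
  have hb := h.pos
  refine ⟨_, _, hdiff 0, hdiff 1, (24 * (q : ℝ) ^ α)⁻¹ ^ 2, 8 * (2 ^ α * (q : ℝ) ^ α) ^ 2,
    by positivity, by positivity, fun z hz => ?_⟩
  rw [(hderiv 0 hz).deriv, (hderiv 1 hz).deriv]
  exact h.weighted_sq_norm_gapSeries_mem_Icc hα hz
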